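/- arXiv:2506.12521 — 2 statements merged into one kernel-verified Lean document; each statement's English description precedes it below -/
import Mathlib

section
/- Let A₁,…,A_k be quasi S-primary C-hyperideals of a commutative multiplicative hyperring G with rad(A_i) = rad(A_j) for all i,j. Then A = ⋂_{i=1}^k A_i is a quasi S-primary hyperideal of G. -/
/-! The intersection is a hyperideal contained in each `Aᵢ`, and its radical is the common radical
of the `Aᵢ`: finitely many exponents have a maximum, and powers stay inside a hyperideal once they
enter it. Hence the element of `S` associated to any single `Aᵢ` is associated to the
intersection. -/


open Set

/-- A commutative multiplicative hyperring: a commutative additive group with a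
commutative, associative hyperoperation `hmul` satisfying `(-a)∘b = -(a∘b)`,
weak distributivity, and having an identity element `e` with `a ∈ e∘a`. -/
class MulHyperring (G : Type*) extends AddCommGroup G where
  hmul : G → G → Set G
  hmul_nonempty : ∀ a b : G, (hmul a b).Nonempty
  hmul_comm : ∀ a b : G, hmul a b = hmul b a
  hmul_assoc : ∀ a b c : G, (⋃ x ∈ hmul a b, hmul x c) = ⋃ x ∈ hmul b c, hmul a x
  neg_hmul : ∀ a b : G, hmul (-a) b = (fun x => -x) '' (hmul a b)
  hmul_add : ∀ a b c : G,
    hmul a (b + c) ⊆ {x | ∃ u ∈ hmul a b, ∃ v ∈ hmul a c, x = u + v}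
  e : G
  e_mem : ∀ a : G, a ∈ hmul e a

namespace MulHyperring

variable {G : Type*} [MulHyperring G]

/-- Hyperproduct of an element with a set: `a ∘ B = ⋃ b ∈ B, a ∘ b`. -/
def smulSet (a : G) (B : Set G) : Set G := ⋃ b ∈ B, hmul a b

/-- Hyperproduct of two sets. -/
def setMul (A B : Set G) : Set G := ⋃ a ∈ A, ⋃ b ∈ B, hmul a b

/-- Hyperproduct `a₁ ∘ a₂ ∘ ⋯ ∘ aₙ` of a (nonempty) list of elements. -/
def hProd : List G → Set G
  | [] => ∅
  | [a] => {a}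
  | a :: b :: l => smulSet a (hProd (b :: l))

/-- `aⁿ` as a hyperproduct. -/
def hPow (a : G) (n : ℕ) : Set G := hProd (List.replicate n a)

/-- `A` is a hyperideal of `G`. -/
def IsHyperideal (A : Set G) : Prop :=
  A.Nonempty ∧ (∀ x ∈ A, ∀ y ∈ A, x - y ∈ A) ∧ ∀ r : G, ∀ x ∈ A, hmul r x ⊆ A

/-- `A` is a `C`-hyperideal: any finite hyperproduct meeting `A` is contained in `A`. -/
def IsCHyperideal (A : Set G) : Prop :=
  IsHyperideal A ∧ ∀ l : List G, l ≠ [] → (hProd l ∩ A).Nonempty → hProd l ⊆ A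

/-- The radical of a (C-)hyperideal: `{a | aⁿ ⊆ A for some n ≥ 1}`. -/
def rad (A : Set G) : Set G := {a | ∃ n : ℕ, 1 ≤ n ∧ hPow a n ⊆ A}

/-- The hyperideal generated by a set. -/
def idealGen (X : Set G) : Set G := ⋂₀ {A | IsHyperideal A ∧ X ⊆ A}

/-- The hyperideal product of two hyperideals. -/
def idealMul (A B : Set G) : Set G := idealGen (setMul A B)

/-- Multiplicative closed subset. -/
def IsMCS (S : Set G) : Prop :=
  e ∈ S ∧ ∀ s₁ ∈ S, ∀ s₂ ∈ S, (hmul s₁ s₂ ∩ S).Nonempty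

/-- Prime hyperideal. -/
def IsPrime (P : Set G) : Prop :=
  IsHyperideal P ∧ P ≠ univ ∧ ∀ x y : G, hmul x y ⊆ P → x ∈ P ∨ y ∈ P

/-- `S`-prime hyperideal. -/
def IsSPrime (S A : Set G) : Prop :=
  IsHyperideal A ∧ A ∩ S = ∅ ∧
    ∃ t ∈ S, ∀ u v : G, hmul u v ⊆ A → hmul t u ⊆ A ∨ hmul t v ⊆ A

/-- `S`-primary hyperideal. -/
def IsSPrimary (S A : Set G) : Prop :=
  IsHyperideal A ∧ A ∩ S = ∅ ∧
    ∃ t ∈ S, ∀ u v : G, hmul u v ⊆ A → hmul t u ⊆ A ∨ hmul t v ⊆ rad A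

/-- Quasi `S`-primary hyperideal. -/
def IsQuasiSPrimary (S A : Set G) : Prop :=
  IsHyperideal A ∧ A ∩ S = ∅ ∧
    ∃ t ∈ S, ∀ u v : G, hmul u v ⊆ A → hmul t u ⊆ rad A ∨ hmul t v ⊆ rad A

/-- Weakly quasi `S`-primary hyperideal. -/
def IsWeaklyQuasiSPrimary (S A : Set G) : Prop :=
  IsHyperideal A ∧ A ∩ S = ∅ ∧
    ∃ t ∈ S, ∀ u v : G, 0 ∉ hmul u v → hmul u v ⊆ A →
      hmul t u ⊆ rad A ∨ hmul t v ⊆ rad A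

/-- Strongly quasi `S`-primary hyperideal. -/
def IsStronglyQuasiSPrimary (S A : Set G) : Prop :=
  IsHyperideal A ∧ A ∩ S = ∅ ∧
    ∃ t ∈ S, ∀ u v : G, hmul u v ⊆ A →
      smulSet t (hPow u 2) ⊆ A ∨ hmul t v ⊆ rad A

/-- The residual `(B : x) = {y | y ∘ x ⊆ B}`. -/
def colon (B : Set G) (x : G) : Set G := {y | hmul y x ⊆ B}

end MulHyperring


namespace MulHyperring

variable {G : Type*} [MulHyperring G]

lemma hPow_succ_of_one_le (a : G) {n : ℕ} (hn : 1 ≤ n) :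
    hPow a (n + 1) = smulSet a (hPow a n) := by
  obtain ⟨p, rfl⟩ := Nat.exists_eq_add_of_le' hn
  rfl

namespace IsHyperideal

variable {A : Set G}

lemma zero_mem (hA : IsHyperideal A) : (0 : G) ∈ A := by
  obtain ⟨⟨x, hx⟩, hsub, -⟩ := hA
  simpa using hsub x hx x hx

lemma smulSet_subset (hA : IsHyperideal A) (a : G) {B : Set G} (hB : B ⊆ A) :
    smulSet a B ⊆ A :=
  iUnion₂_subset fun b hb => hA.2.2 a b (hB hb)

lemma hPow_subset_of_le (hA : IsHyperideal A) {a : G} {m n : ℕ} (hm : 1 ≤ m) (hmn : m ≤ n)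
    (h : hPow a m ⊆ A) : hPow a n ⊆ A := by
  induction n, hmn using Nat.le_induction with
  | base => exact h
  | succ n hmn ih =>
    rw [hPow_succ_of_one_le a (hm.trans hmn)]
    exact hA.smulSet_subset a ih

lemma iInter {ι : Sort*} {A : ι → Set G} (hA : ∀ i, IsHyperideal (A i)) :
    IsHyperideal (⋂ i, A i) := by
  refine ⟨⟨0, mem_iInter.2 fun i => (hA i).zero_mem⟩, ?_, ?_⟩
  · intro x hx y hy
    rw [mem_iInter] at hx hy ⊢
    exact fun i => (hA i).2.1 x (hx i) y (hy i)
  · intro r x hx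
    rw [mem_iInter] at hx
    exact subset_iInter fun i => (hA i).2.2 r x (hx i)

end IsHyperideal

lemma rad_mono {A B : Set G} (h : A ⊆ B) : rad A ⊆ rad B :=
  fun _ ⟨n, hn, hsub⟩ => ⟨n, hn, hsub.trans h⟩

lemma rad_iInter {ι : Type*} [Finite ι] {A : ι → Set G} (hA : ∀ i, IsHyperideal (A i)) :
    rad (⋂ i, A i) = ⋂ i, rad (A i) := by
  refine (subset_iInter fun i => rad_mono (iInter_subset A i)).antisymm fun a ha => ?_
  choose n hn hsub using mem_iInter.1 ha
  obtain ⟨N, hN⟩ := (finite_range n).bddAbove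
  refine ⟨max N 1, le_max_right N 1, subset_iInter fun i => ?_⟩
  exact (hA i).hPow_subset_of_le (hn i) ((hN (mem_range_self i)).trans (le_max_left N 1))
    (hsub i)

lemma IsQuasiSPrimary.of_subset_of_rad_eq {S A B : Set G} (hA : IsQuasiSPrimary S A)
    (hB : IsHyperideal B) (hBA : B ⊆ A) (hrad : rad B = rad A) : IsQuasiSPrimary S B := by
  obtain ⟨-, hdisj, t, htS, ht⟩ := hA
  refine ⟨hB, subset_empty_iff.1 (hdisj ▸ inter_subset_inter_left S hBA), t, htS, ?_⟩
  intro u v huv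
  rw [hrad]
  exact ht u v (huv.trans hBA)

end MulHyperring

open MulHyperring in
theorem quasiSPrimary_iInter_general {G : Type*} [MulHyperring G] (S : Set G)
    (k : ℕ) (hk : 0 < k) (A : Fin k → Set G)
    (hq : ∀ i, IsQuasiSPrimary S (A i)) (hrad : ∀ i j, rad (A i) = rad (A j)) :
    IsQuasiSPrimary S (⋂ i, A i) := by
  let i₀ : Fin k := ⟨0, hk⟩
  have hideal : ∀ i, IsHyperideal (A i) := fun i => (hq i).1
  have : Nonempty (Fin k) := ⟨i₀⟩
  have hrad_iInter : rad (⋂ i, A i) = rad (A i₀) := by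
    rw [rad_iInter hideal, iInter_congr fun i => hrad i i₀, iInter_const]
  exact (hq i₀).of_subset_of_rad_eq (IsHyperideal.iInter hideal) (iInter_subset A i₀)
    hrad_iInter

open MulHyperring in
theorem quasiSPrimary_iInter {G : Type*} [MulHyperring G] (S : Set G) (hS : IsMCS S)
    (k : ℕ) (hk : 0 < k) (A : Fin k → Set G) (hA : ∀ i, IsCHyperideal (A i))
    (hq : ∀ i, IsQuasiSPrimary S (A i)) (hrad : ∀ i j, rad (A i) = rad (A j)) :
    IsQuasiSPrimary S (⋂ i, A i) :=
  quasiSPrimary_iInter_general S k hk A hq hrad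
end

section
/- Let A be a C-hyperideal of a commutative multiplicative hyperring G and S an MCS with A ∩ S = ∅. Then A is a quasi S-primary hyperideal of G if and only if there exists t ∈ S such that (rad(A) : t) is a prime hyperideal of G. -/
open Set

/-!
The radical of a `C`-hyperideal `A` behaves like the radical of an ideal: it is a hyperideal
(if `aⁿ, bᵐ ⊆ A`, every element of `(a + b)ⁿ⁺ᵐ` is a sum of elements of products `aᵖ ∘ b^q`
with `p + q = n + m`, and each of these lies in `A`), it inherits the `C`-property, and
`w ∈ rad A` as soon as `wⁿ ⊆ rad A` for some `n`. Hence a witness `t` of the quasi `S`-primary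
condition for `A` is also one for `rad A`. Now take `t' ∈ t ∘ t ∩ S`. If `x ∘ y ∘ t' ⊆ rad A`,
then `(x ∘ t) ∘ (y ∘ t) = (x ∘ y) ∘ (t ∘ t)` meets `rad A`, hence lies in it by the `C`-property;
so `t ∘ (x ∘ t)` or `t ∘ (y ∘ t)` lies in `rad A`, and with it `x ∘ t'` or `y ∘ t'`.
Thus `(rad A : t')` is prime, and proper because `rad A ∩ S = ∅`.
Conversely `A ⊆ (rad A : t)`, so primality of `(rad A : t)` gives the quasi `S`-primary condition.
-/

namespace MulHyperring

variable {G : Type*} [MulHyperring G]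

section SetMul

lemma mem_setMul {X Y : Set G} {z : G} :
    z ∈ setMul X Y ↔ ∃ x ∈ X, ∃ y ∈ Y, z ∈ hmul x y := by
  simp [setMul]

lemma setMul_singleton (a b : G) : setMul {a} {b} = hmul a b := by
  simp [setMul]

lemma setMul_singleton_left (a : G) (Y : Set G) : setMul {a} Y = smulSet a Y := by
  simp [setMul, smulSet]

lemma setMul_singleton_left_subset_iff {a : G} {Y P : Set G} :
    setMul {a} Y ⊆ P ↔ ∀ y ∈ Y, hmul a y ⊆ P := by
  simp [setMul]

lemma setMul_comm (X Y : Set G) : setMul X Y = setMul Y X := by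
  ext z
  simp only [mem_setMul]
  exact ⟨fun ⟨x, hx, y, hy, hz⟩ => ⟨y, hy, x, hx, hmul_comm x y ▸ hz⟩,
    fun ⟨y, hy, x, hx, hz⟩ => ⟨x, hx, y, hy, hmul_comm y x ▸ hz⟩⟩

lemma setMul_mono {X X' Y Y' : Set G} (hX : X ⊆ X') (hY : Y ⊆ Y') :
    setMul X Y ⊆ setMul X' Y' := fun _ hz =>
  let ⟨x, hx, y, hy, hz⟩ := mem_setMul.1 hz
  mem_setMul.2 ⟨x, hX hx, y, hY hy, hz⟩

lemma setMul_assoc (X Y Z : Set G) : setMul (setMul X Y) Z = setMul X (setMul Y Z) := by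
  ext w
  simp only [mem_setMul]
  constructor
  · rintro ⟨v, ⟨x, hx, y, hy, hv⟩, z, hz, hw⟩
    have : w ∈ ⋃ u ∈ hmul y z, hmul x u := hmul_assoc x y z ▸ mem_biUnion hv hw
    obtain ⟨u, hu, hw⟩ := mem_iUnion₂.1 this
    exact ⟨x, hx, u, ⟨y, hy, z, hz, hu⟩, hw⟩
  · rintro ⟨x, hx, v, ⟨y, hy, z, hz, hv⟩, hw⟩
    have : w ∈ ⋃ u ∈ hmul x y, hmul u z := (hmul_assoc x y z).symm ▸ mem_biUnion hv hw
    obtain ⟨u, hu, hw⟩ := mem_iUnion₂.1 this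
    exact ⟨u, ⟨x, hx, y, hy, hu⟩, z, hz, hw⟩

lemma setMul_setMul_setMul_comm (X Y Z W : Set G) :
    setMul (setMul X Y) (setMul Z W) = setMul (setMul X Z) (setMul Y W) := by
  rw [setMul_assoc, setMul_assoc, ← setMul_assoc Y, setMul_comm Y Z, setMul_assoc Z]

lemma hmul_hmul_hmul_comm (x y z w : G) :
    setMul (hmul x y) (hmul z w) = setMul (hmul x z) (hmul y w) := by
  simpa only [setMul_singleton] using setMul_setMul_setMul_comm {x} {y} {z} {w}

lemma setMul_nonempty {X Y : Set G} (hX : X.Nonempty) (hY : Y.Nonempty) :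
    (setMul X Y).Nonempty :=
  let ⟨x, hx⟩ := hX
  let ⟨y, hy⟩ := hY
  let ⟨z, hz⟩ := hmul_nonempty x y
  ⟨z, mem_setMul.2 ⟨x, hx, y, hy, hz⟩⟩

lemma forall_or_forall_of_setMul_subset {B : Set G} {p : G → Prop}
    (h : ∀ u v, hmul u v ⊆ B → p u ∨ p v) {X Y : Set G} (hXY : setMul X Y ⊆ B) :
    (∀ x ∈ X, p x) ∨ ∀ y ∈ Y, p y := by
  by_contra! ⟨⟨x, hx, hpx⟩, ⟨y, hy, hpy⟩⟩
  exact (h x y fun w hw => hXY (mem_setMul.2 ⟨x, hx, y, hy, hw⟩)).elim hpx hpy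

end SetMul

section Products

def sProd : List (Set G) → Set G
  | [] => ∅
  | [X] => X
  | X :: Y :: l => setMul X (sProd (Y :: l))

lemma sProd_cons (X : Set G) {l : List (Set G)} (hl : l ≠ []) :
    sProd (X :: l) = setMul X (sProd l) := by
  cases l with
  | nil => exact absurd rfl hl
  | cons Y l => rfl

lemma sProd_append {l₁ l₂ : List (Set G)} (h₁ : l₁ ≠ []) (h₂ : l₂ ≠ []) :
    sProd (l₁ ++ l₂) = setMul (sProd l₁) (sProd l₂) := by
  induction l₁ with
  | nil => exact absurd rfl h₁
  | cons X l ih =>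
    cases l with
    | nil => exact sProd_cons X h₂
    | cons Y l =>
      rw [List.cons_append, sProd_cons X (by simp), ih (by simp), sProd_cons X (by simp),
        setMul_assoc]

lemma sProd_perm {l l' : List (Set G)} (h : l.Perm l') : sProd l = sProd l' := by
  induction h with
  | nil => rfl
  | @cons X l₁ l₂ h ih =>
    cases l₁ with
    | nil => rw [← h.nil_eq]
    | cons Y m =>
      have h₂ : l₂ ≠ [] := fun he => by simp [he] at h
      rw [sProd_cons X (by simp), sProd_cons X h₂, ih]
  | swap X Y l =>
    cases l with
    | nil => exact setMul_comm Y X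
    | cons Z m =>
      simp only [sProd_cons _ (List.cons_ne_nil _ _)]
      rw [← setMul_assoc, ← setMul_assoc, setMul_comm Y X]
  | trans _ _ ih₁ ih₂ => rw [ih₁, ih₂]

lemma sProd_replicate_mono {X Y : Set G} (h : X ⊆ Y) :
    ∀ n, sProd (List.replicate n X) ⊆ sProd (List.replicate n Y)
  | 0 => subset_rfl
  | 1 => h
  | n + 2 => setMul_mono h (sProd_replicate_mono h (n + 1))

lemma sProd_replicate_setMul (X Y : Set G) : ∀ n,
    sProd (List.replicate (n + 1) (setMul X Y)) =
      setMul (sProd (List.replicate (n + 1) X)) (sProd (List.replicate (n + 1) Y))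
  | 0 => rfl
  | n + 1 => by
    change setMul (setMul X Y) (sProd (List.replicate (n + 1) (setMul X Y))) =
      setMul (setMul X (sProd (List.replicate (n + 1) X)))
        (setMul Y (sProd (List.replicate (n + 1) Y)))
    rw [sProd_replicate_setMul X Y n, setMul_setMul_setMul_comm]

lemma sProd_replicate_sProd {l : List (Set G)} (hl : l ≠ []) : ∀ m,
    sProd (List.replicate (m + 1) (sProd l)) = sProd (List.replicate (m + 1) l).flatten
  | 0 => by simp [sProd]
  | m + 1 => by
    change setMul (sProd l) (sProd (List.replicate (m + 1) (sProd l))) =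
      sProd (l ++ (List.replicate (m + 1) l).flatten)
    rw [sProd_replicate_sProd hl m, sProd_append hl (by simp [hl])]

lemma hProd_eq_sProd (l : List G) : hProd l = sProd (l.map fun a => {a}) := by
  induction l with
  | nil => rfl
  | cons a m ih =>
    cases m with
    | nil => rfl
    | cons b m =>
      rw [List.map_cons, sProd_cons _ (by simp), ← ih, setMul_singleton_left]
      rfl

lemma hProd_append {l₁ l₂ : List G} (h₁ : l₁ ≠ []) (h₂ : l₂ ≠ []) :
    hProd (l₁ ++ l₂) = setMul (hProd l₁) (hProd l₂) := by
  rw [hProd_eq_sProd, List.map_append, sProd_append (by simpa using h₁) (by simpa using h₂),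
    ← hProd_eq_sProd, ← hProd_eq_sProd]

lemma hProd_pair (a b : G) : hProd [a, b] = hmul a b := by
  simp [hProd, smulSet]

lemma hPow_eq_sProd (a : G) (n : ℕ) : hPow a n = sProd (List.replicate n {a}) := by
  rw [hPow, hProd_eq_sProd, List.map_replicate]

lemma hPow_one (a : G) : hPow a 1 = {a} := rfl

lemma hPow_succ (a : G) {n : ℕ} (hn : 1 ≤ n) : hPow a (n + 1) = setMul {a} (hPow a n) := by
  obtain ⟨k, rfl⟩ := Nat.exists_eq_add_of_le' hn
  exact (setMul_singleton_left _ _).symm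

lemma hPow_nonempty (a : G) {n : ℕ} (hn : 1 ≤ n) : (hPow a n).Nonempty := by
  induction n, hn using Nat.le_induction with
  | base => exact singleton_nonempty a
  | succ n hn ih => rw [hPow_succ a hn]; exact setMul_nonempty (singleton_nonempty a) ih

lemma hPow_subset_sProd_replicate {w : G} {X : Set G} (hw : w ∈ X) (n : ℕ) :
    hPow w n ⊆ sProd (List.replicate n X) :=
  hPow_eq_sProd w n ▸ sProd_replicate_mono (singleton_subset_iff.2 hw) n

lemma hPow_subset_setMul_hPow {w a b : G} (hw : w ∈ hmul a b) {n : ℕ} (hn : 1 ≤ n) :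
    hPow w n ⊆ setMul (hPow a n) (hPow b n) := by
  obtain ⟨k, rfl⟩ := Nat.exists_eq_add_of_le' hn
  rw [← setMul_singleton] at hw
  refine (hPow_subset_sProd_replicate hw _).trans ?_
  rw [sProd_replicate_setMul, ← hPow_eq_sProd, ← hPow_eq_sProd]

lemma hPow_subset_hProd_flatten {y : G} {l : List G} (hy : y ∈ hProd l) (hl : l ≠ [])
    {m : ℕ} (hm : 1 ≤ m) : hPow y m ⊆ hProd (List.replicate m l).flatten := by
  obtain ⟨k, rfl⟩ := Nat.exists_eq_add_of_le' hm
  rw [hProd_eq_sProd, List.map_flatten, List.map_replicate,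
    ← sProd_replicate_sProd (by simpa using hl), ← hProd_eq_sProd]
  exact hPow_subset_sProd_replicate hy _

end Products

section Hyperideal

lemma IsHyperideal.zero_mem_s6 {A : Set G} (hA : IsHyperideal A) : (0 : G) ∈ A := by
  obtain ⟨a, ha⟩ := hA.1
  simpa using hA.2.1 a ha a ha

lemma IsHyperideal.add_mem {A : Set G} (hA : IsHyperideal A) {x y : G} (hx : x ∈ A)
    (hy : y ∈ A) : x + y ∈ A := by
  simpa using hA.2.1 x hx (0 - y) (hA.2.1 0 hA.zero_mem_s6 y hy)

lemma IsHyperideal.setMul_subset {A : Set G} (hA : IsHyperideal A) (X : Set G) :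
    setMul X A ⊆ A := fun _ hz =>
  let ⟨x, _, y, hy, hz⟩ := mem_setMul.1 hz
  hA.2.2 x y hy hz

lemma IsHyperideal.hPow_subset_of_le_s6 {A : Set G} (hA : IsHyperideal A) {a : G} {n : ℕ}
    (hn : 1 ≤ n) (ha : hPow a n ⊆ A) {m : ℕ} (hm : n ≤ m) : hPow a m ⊆ A := by
  induction m, hm using Nat.le_induction with
  | base => exact ha
  | succ m hm ih =>
    rw [hPow_succ a (hn.trans hm)]
    exact (setMul_mono subset_rfl ih).trans (hA.setMul_subset _)

lemma IsHyperideal.closure_subset {A T : Set G} (hA : IsHyperideal A) (hT : T ⊆ A) :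
    (AddSubsemigroup.closure T : Set G) ⊆ A := fun _ hx =>
  AddSubsemigroup.closure_induction (fun _ hx => hT hx) (fun _ _ _ _ => hA.add_mem) hx

lemma hmul_subset_closure {T : Set G} {x : G} (hx : x ∈ AddSubsemigroup.closure T) (c : G) :
    hmul c x ⊆ AddSubsemigroup.closure (smulSet c T) := by
  induction hx using AddSubsemigroup.closure_induction with
  | mem x hx => exact fun w hw => AddSubsemigroup.subset_closure (mem_biUnion hx hw)
  | add x y _ _ hx hy =>
    intro w hw
    obtain ⟨u, hu, v, hv, rfl⟩ := hmul_add c x y hw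
    exact add_mem (hx hu) (hy hv)

end Hyperideal

section Binomial

/-- `aᵖ ∘ b^q` as one product, so that `p = 0` or `q = 0` is allowed (`hPow a 0 = ∅`). -/
def monomial (a b : G) (p q : ℕ) : Set G :=
  sProd (List.replicate p {a} ++ List.replicate q {b})

lemma monomial_comm (a b : G) (p q : ℕ) : monomial a b p q = monomial b a q p :=
  sProd_perm List.perm_append_comm

lemma monomial_succ (a b : G) {p q : ℕ} (hpq : 1 ≤ p + q) :
    monomial a b (p + 1) q = setMul {a} (monomial a b p q) := by
  have hne : List.replicate p ({a} : Set G) ++ List.replicate q {b} ≠ [] := by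
    simp only [ne_eq, List.append_eq_nil_iff, List.replicate_eq_nil_iff]
    omega
  rw [monomial, List.replicate_succ, List.cons_append, sProd_cons _ hne, monomial]

lemma IsHyperideal.monomial_subset {A : Set G} (hA : IsHyperideal A) {a : G} {n : ℕ}
    (hn : 1 ≤ n) (ha : hPow a n ⊆ A) (b : G) {p : ℕ} (hp : n ≤ p) (q : ℕ) :
    monomial a b p q ⊆ A := by
  induction q with
  | zero => simpa [monomial, ← hPow_eq_sProd] using hA.hPow_subset_of_le_s6 hn ha hp
  | succ q ih =>
    rw [monomial_comm, monomial_succ b a (by omega), monomial_comm b]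
    exact (setMul_mono subset_rfl ih).trans (hA.setMul_subset _)

lemma hPow_add_subset_closure (a b : G) {N : ℕ} (hN : 1 ≤ N) :
    hPow (a + b) N ⊆
      AddSubsemigroup.closure {z | ∃ p q, p + q = N ∧ z ∈ monomial a b p q} := by
  induction N, hN using Nat.le_induction with
  | base =>
    rw [hPow_one, singleton_subset_iff]
    exact add_mem (AddSubsemigroup.subset_closure ⟨1, 0, rfl, rfl⟩)
      (AddSubsemigroup.subset_closure ⟨0, 1, rfl, rfl⟩)
  | succ N hN ih =>
    have hleft : smulSet a {z | ∃ p q, p + q = N ∧ z ∈ monomial a b p q} ⊆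
        {z | ∃ p q, p + q = N + 1 ∧ z ∈ monomial a b p q} := by
      intro w hw
      obtain ⟨z, ⟨p, q, hpq, hz⟩, hw⟩ := mem_iUnion₂.1 hw
      refine ⟨p + 1, q, by omega, ?_⟩
      rw [monomial_succ a b (by omega)]
      exact mem_setMul.2 ⟨a, rfl, z, hz, hw⟩
    have hright : smulSet b {z | ∃ p q, p + q = N ∧ z ∈ monomial a b p q} ⊆
        {z | ∃ p q, p + q = N + 1 ∧ z ∈ monomial a b p q} := by
      intro w hw
      obtain ⟨z, ⟨p, q, hpq, hz⟩, hw⟩ := mem_iUnion₂.1 hw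
      refine ⟨p, q + 1, by omega, ?_⟩
      rw [monomial_comm, monomial_succ b a (by omega), monomial_comm b]
      exact mem_setMul.2 ⟨b, rfl, z, hz, hw⟩
    rw [hPow_succ _ hN, setMul_singleton_left_subset_iff]
    intro y hy x hx
    rw [hmul_comm] at hx
    obtain ⟨u, hu, v, hv, rfl⟩ := hmul_add y a b hx
    rw [hmul_comm] at hu hv
    exact add_mem (AddSubsemigroup.closure_mono hleft (hmul_subset_closure (ih hy) a hu))
      (AddSubsemigroup.closure_mono hright (hmul_subset_closure (ih hy) b hv))

end Binomial

section Radical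

lemma subset_rad (A : Set G) : A ⊆ rad A := fun _ ha =>
  ⟨1, le_rfl, singleton_subset_iff.2 ha⟩

lemma IsHyperideal.hmul_subset_rad {A : Set G} (hA : IsHyperideal A) {z : G} (hz : z ∈ rad A)
    (r : G) : hmul r z ⊆ rad A := by
  obtain ⟨n, hn, hzn⟩ := hz
  exact fun w hw => ⟨n, hn, (hPow_subset_setMul_hPow hw hn).trans
    ((setMul_mono subset_rfl hzn).trans (hA.setMul_subset _))⟩

lemma IsHyperideal.neg_mem_rad {A : Set G} (hA : IsHyperideal A) {a : G} (ha : a ∈ rad A) :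
    -a ∈ rad A :=
  hA.hmul_subset_rad ha (-e) (by rw [neg_hmul]; exact mem_image_of_mem _ (e_mem a))

lemma IsHyperideal.add_mem_rad {A : Set G} (hA : IsHyperideal A) {a b : G} (ha : a ∈ rad A)
    (hb : b ∈ rad A) : a + b ∈ rad A := by
  obtain ⟨n, hn, han⟩ := ha
  obtain ⟨m, hm, hbm⟩ := hb
  refine ⟨n + m, by omega,
    (hPow_add_subset_closure a b (by omega)).trans (hA.closure_subset ?_)⟩
  rintro z ⟨p, q, hpq, hz⟩
  rcases le_or_gt n p with hp | hp
  · exact hA.monomial_subset hn han b hp q hz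
  · rw [monomial_comm] at hz
    exact hA.monomial_subset hm hbm a (by omega) p hz

lemma isHyperideal_rad {A : Set G} (hA : IsHyperideal A) : IsHyperideal (rad A) :=
  ⟨⟨0, subset_rad A hA.zero_mem_s6⟩,
    fun x hx y hy => sub_eq_add_neg x y ▸ hA.add_mem_rad hx (hA.neg_mem_rad hy),
    fun r _ hx => hA.hmul_subset_rad hx r⟩

end Radical

section CHyperideal

lemma IsCHyperideal.hProd_subset_rad {A : Set G} (hA : IsCHyperideal A) {l : List G}
    (hl : l ≠ []) (h : (hProd l ∩ rad A).Nonempty) : hProd l ⊆ rad A := by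
  obtain ⟨z, hz, n, hn, hzn⟩ := h
  have hflat : hProd (List.replicate n l).flatten ⊆ A := by
    refine hA.2 _ (by simp [hl, Nat.one_le_iff_ne_zero.1 hn]) ?_
    obtain ⟨d, hd⟩ := hPow_nonempty z hn
    exact ⟨d, hPow_subset_hProd_flatten hz hl hn hd, hzn hd⟩
  exact fun y hy => ⟨n, hn, (hPow_subset_hProd_flatten hy hl hn).trans hflat⟩

lemma IsCHyperideal.mem_rad_of_hPow_subset_rad {A : Set G} (hA : IsCHyperideal A) {w : G}
    {n : ℕ} (hn : 1 ≤ n) (h : hPow w n ⊆ rad A) : w ∈ rad A := by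
  obtain ⟨c, hc⟩ := hPow_nonempty w hn
  obtain ⟨m, hm, hcm⟩ := h hc
  have hsub : hPow c m ⊆ hPow w (m * n) := by
    simpa [hPow] using hPow_subset_hProd_flatten (l := List.replicate n w) hc
      (by simp [Nat.one_le_iff_ne_zero.1 hn]) hm
  obtain ⟨d, hd⟩ := hPow_nonempty c hm
  exact ⟨m * n, Nat.mul_pos hm hn, hA.2 _
    (by simp [Nat.one_le_iff_ne_zero.1 hm, Nat.one_le_iff_ne_zero.1 hn]) ⟨d, hsub hd, hcm hd⟩⟩

lemma IsCHyperideal.hmul_subset_rad_of_forall_hPow {A : Set G} (hA : IsCHyperideal A)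
    {t u : G} {n : ℕ} (hn : 1 ≤ n) (h : ∀ x ∈ hPow u n, hmul t x ⊆ rad A) :
    hmul t u ⊆ rad A := by
  have htu : setMul {t} (hPow u n) ⊆ rad A := setMul_singleton_left_subset_iff.2 h
  have hTU : setMul (hPow t n) (hPow u n) ⊆ rad A := by
    obtain ⟨k, rfl⟩ := Nat.exists_eq_add_of_le' hn
    cases k with
    | zero => simpa only [zero_add, hPow_one] using htu
    | succ k =>
      rw [hPow_succ t (by omega), setMul_comm {t}, setMul_assoc]
      exact (setMul_mono subset_rfl htu).trans ((isHyperideal_rad hA.1).setMul_subset _)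
  exact fun w hw => hA.mem_rad_of_hPow_subset_rad hn ((hPow_subset_setMul_hPow hw hn).trans hTU)

lemma IsCHyperideal.exists_setMul_hPow_subset {A : Set G} (hA : IsCHyperideal A) {u v : G}
    (huv : hmul u v ⊆ rad A) : ∃ n, 1 ≤ n ∧ setMul (hPow u n) (hPow v n) ⊆ A := by
  obtain ⟨z, hz⟩ := hmul_nonempty u v
  obtain ⟨n, hn, hzn⟩ := huv hz
  have hne : List.replicate n u ≠ [] ∧ List.replicate n v ≠ [] := by
    simp [Nat.one_le_iff_ne_zero.1 hn]
  have hprod := hProd_append hne.1 hne.2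
  refine ⟨n, hn, hprod ▸ hA.2 _ (by simp [hne.1]) ?_⟩
  obtain ⟨d, hd⟩ := hPow_nonempty z hn
  exact ⟨d, hprod ▸ hPow_subset_setMul_hPow hz hn hd, hzn hd⟩

lemma IsCHyperideal.hmul_subset_rad_or_of_hmul_subset_rad {A : Set G} (hA : IsCHyperideal A)
    {t : G} (hq : ∀ u v, hmul u v ⊆ A → hmul t u ⊆ rad A ∨ hmul t v ⊆ rad A) {u v : G}
    (huv : hmul u v ⊆ rad A) : hmul t u ⊆ rad A ∨ hmul t v ⊆ rad A := by
  obtain ⟨n, hn, hUV⟩ := hA.exists_setMul_hPow_subset huv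
  exact (forall_or_forall_of_setMul_subset hq hUV).imp
    (hA.hmul_subset_rad_of_forall_hPow hn) (hA.hmul_subset_rad_of_forall_hPow hn)

end CHyperideal

section Colon

lemma IsMCS.hPow_inter_nonempty {S : Set G} (hS : IsMCS S) {s : G} (hs : s ∈ S) {n : ℕ}
    (hn : 1 ≤ n) : (hPow s n ∩ S).Nonempty := by
  induction n, hn using Nat.le_induction with
  | base => exact ⟨s, rfl, hs⟩
  | succ n hn ih =>
    obtain ⟨y, hy, hyS⟩ := ih
    obtain ⟨z, hz, hzS⟩ := hS.2 s hs y hyS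
    exact ⟨z, hPow_succ s hn ▸ mem_setMul.2 ⟨s, rfl, y, hy, hz⟩, hzS⟩

lemma IsMCS.rad_inter_eq_empty {A S : Set G} (hS : IsMCS S) (hAS : A ∩ S = ∅) :
    rad A ∩ S = ∅ := by
  refine eq_empty_iff_forall_notMem.2 fun s ⟨⟨n, hn, hsn⟩, hs⟩ => ?_
  obtain ⟨c, hc, hcS⟩ := hS.hPow_inter_nonempty hs hn
  exact eq_empty_iff_forall_notMem.1 hAS c ⟨hsn hc, hcS⟩

lemma IsMCS.colon_ne_univ {P S : Set G} (hS : IsMCS S) (hPS : P ∩ S = ∅) {t : G}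
    (ht : t ∈ S) : colon P t ≠ univ := by
  intro h
  obtain ⟨s, hs, hsS⟩ := hS.2 t ht t ht
  have htP : t ∈ colon P t := h ▸ mem_univ t
  exact eq_empty_iff_forall_notMem.1 hPS s ⟨htP hs, hsS⟩

lemma isHyperideal_colon {P : Set G} (hP : IsHyperideal P) (t : G) :
    IsHyperideal (colon P t) := by
  refine ⟨⟨0, ?_⟩, fun x hx y hy w hw => ?_, fun r x hx w hw => ?_⟩
  · show hmul 0 t ⊆ P
    rw [hmul_comm]
    exact hP.2.2 t 0 hP.zero_mem_s6
  · rw [hmul_comm, sub_eq_add_neg] at hw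
    obtain ⟨u, hu, v, hv, rfl⟩ := hmul_add t x (-y) hw
    rw [hmul_comm, neg_hmul] at hv
    obtain ⟨v, hv, rfl⟩ := hv
    rw [← sub_eq_add_neg]
    exact hP.2.1 u (hx (hmul_comm t x ▸ hu)) v (hy hv)
  · show hmul w t ⊆ P
    calc hmul w t ⊆ setMul (hmul r x) {t} := by
          rw [← setMul_singleton]; exact setMul_mono (singleton_subset_iff.2 hw) subset_rfl
      _ = setMul {r} (hmul x t) := by rw [← setMul_singleton r x, setMul_assoc, setMul_singleton]
      _ ⊆ P := (setMul_mono subset_rfl hx).trans (hP.setMul_subset _)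

lemma IsHyperideal.subset_colon_rad {A : Set G} (hA : IsHyperideal A) (t : G) :
    A ⊆ colon (rad A) t := fun z hz => by
  show hmul z t ⊆ rad A
  rw [hmul_comm]
  exact hA.hmul_subset_rad (subset_rad A hz) t

lemma hmul_subset_of_forall_hmul_subset {P : Set G} {x t t' : G} (ht' : t' ∈ hmul t t)
    (h : ∀ c ∈ hmul x t, hmul t c ⊆ P) : hmul x t' ⊆ P :=
  calc hmul x t' ⊆ setMul {x} (hmul t t) := by
        rw [← setMul_singleton]; exact setMul_mono subset_rfl (singleton_subset_iff.2 ht')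
    _ = setMul {t} (hmul x t) := by
        rw [← setMul_singleton t t, ← setMul_assoc, setMul_comm, setMul_singleton x t]
    _ ⊆ P := setMul_singleton_left_subset_iff.2 h

lemma IsCHyperideal.mem_colon_or_mem_colon {A : Set G} (hA : IsCHyperideal A) {t t' : G}
    (hq : ∀ u v, hmul u v ⊆ A → hmul t u ⊆ rad A ∨ hmul t v ⊆ rad A)
    (ht' : t' ∈ hmul t t) {x y : G} (hxy : hmul x y ⊆ colon (rad A) t') :
    x ∈ colon (rad A) t' ∨ y ∈ colon (rad A) t' := by
  have hprod : hProd [x, t, y, t] = setMul (hmul x t) (hmul y t) := by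
    rw [show [x, t, y, t] = [x, t] ++ [y, t] from rfl, hProd_append (by simp) (by simp),
      hProd_pair, hProd_pair]
  have hkey : setMul (hmul x t) (hmul y t) ⊆ rad A := by
    rw [← hprod]
    refine hA.hProd_subset_rad (by simp) ?_
    obtain ⟨z, hz⟩ := hmul_nonempty x y
    obtain ⟨w, hw⟩ := hmul_nonempty z t'
    refine ⟨w, ?_, hxy hz hw⟩
    rw [hprod, hmul_hmul_hmul_comm]
    exact mem_setMul.2 ⟨z, hz, t', ht', hw⟩
  exact (forall_or_forall_of_setMul_subset
    (fun _ _ => hA.hmul_subset_rad_or_of_hmul_subset_rad hq) hkey).imp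
    (hmul_subset_of_forall_hmul_subset ht') (hmul_subset_of_forall_hmul_subset ht')

end Colon

end MulHyperring

open MulHyperring in
theorem quasiSPrimary_iff_colon_rad_prime {G : Type*} [MulHyperring G] (A S : Set G) (hA : IsCHyperideal A)
    (hS : IsMCS S) (hAS : A ∩ S = ∅) :
    IsQuasiSPrimary S A ↔ ∃ t ∈ S, IsPrime (colon (rad A) t) := by
  constructor
  · rintro ⟨-, -, t, htS, hq⟩
    obtain ⟨t', ht', ht'S⟩ := hS.2 t htS t htS
    exact ⟨t', ht'S, isHyperideal_colon (isHyperideal_rad hA.1) t',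
      hS.colon_ne_univ (hS.rad_inter_eq_empty hAS) ht'S,
      fun _ _ => hA.mem_colon_or_mem_colon hq ht'⟩
  · rintro ⟨t, htS, -, -, hprime⟩
    refine ⟨hA.1, hAS, t, htS, fun u v huv => ?_⟩
    rw [hmul_comm t u, hmul_comm t v]
    exact hprime u v (huv.trans (hA.1.subset_colon_rad t))
end
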